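/- arXiv:1611.08419 — 2 statements merged into one kernel-verified Lean document; each statement's English description precedes it below -/
import Mathlib

section
/- For all infinite cycles A and B and all n, every vertex m of the pedigree graph G_n^{AB} has at most 2 neighbors k with k < m (at most 2 edges to vertices created in the past). -/
open MeasureTheory

/-- An infinite cycle: coordinate `i` represents the choice `c_{i+3} ∈ {1,…,i+3}`
(encoded as `Fin (i+3)`, with value `v` representing `v+1`). -/
abbrev InfCycle := ∀ i : ℕ, Fin (i + 3)

/-- The list of nodes of the cycle `A_n`, in positive direction starting at node 1.
`A_{n+1}` arises from `A_n` by inserting node `n+1` into the `c_n`-th edge. -/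
def listOf (c : InfCycle) : ℕ → List ℕ
  | 0 => []
  | 1 => []
  | 2 => []
  | 3 => [1, 2, 3]
  | (n + 4) => (listOf c (n + 3)).insertIdx ((c n).val + 1) (n + 4)

/-- The node following `x` in the cyclic order given by the list `l`. -/
def cyclicNext (l : List ℕ) (x : ℕ) : ℕ := (l.rotate 1).getD (l.idxOf x) 0

/-- The node preceding `x` in the cyclic order given by the list `l`. -/
def cyclicPrev (l : List ℕ) (x : ℕ) : ℕ := (l.rotate (l.length - 1)).getD (l.idxOf x) 0

/-- `ν⁺_A(k)`: the neighbor of `k` in `A_k` in positive direction. -/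
def nuPlus (c : InfCycle) (k : ℕ) : ℕ :=
  if k ≤ 1 then 0 else if k = 2 then 1 else cyclicNext (listOf c k) k

/-- `ν⁻_A(k)`: the neighbor of `k` in `A_k` in negative direction. -/
def nuMinus (c : InfCycle) (k : ℕ) : ℕ :=
  if k ≤ 1 then 0 else if k = 2 then 1 else cyclicPrev (listOf c k) k

/-- `ν_A(k) = {ν⁺_A(k), ν⁻_A(k)}`, the edge of `A_{k-1}` into which `k` was inserted. -/
def nuSet (c : InfCycle) (k : ℕ) : Finset ℕ := {nuPlus c k, nuMinus c k}

/-- The edges (as unordered pairs) of the cycle whose nodes, in cyclic order, are `l`. -/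
def edgeList (l : List ℕ) : List (Finset ℕ) :=
  l.zipWith (fun x y => ({x, y} : Finset ℕ)) (l.rotate 1)

/-- `E(A_n)`: the edge set of the cycle `A_n`. -/
def cycleEdges (c : InfCycle) (n : ℕ) : Finset (Finset ℕ) := (edgeList (listOf c n)).toFinset

/-- `k` is a vertex of the pedigree graph `G_n^{AB}`. -/
def isVertex (a b : InfCycle) (n k : ℕ) : Prop := 4 ≤ k ∧ k ≤ n ∧ nuSet a k ≠ nuSet b k

/-- The condition for an edge of the pedigree graph between vertices `k < m`
(type-1 A→B, type-1 B→A, type-2 A→B, type-2 B→A). -/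
def edgeCond (a b : InfCycle) (k m : ℕ) : Prop :=
  nuSet a m = nuSet b k ∨ nuSet b m = nuSet a k ∨
  (k = max (nuPlus a m) (nuMinus a m) ∧ nuSet b k ∩ nuSet a m = ∅) ∨
  (k = max (nuPlus b m) (nuMinus b m) ∧ nuSet a k ∩ nuSet b m = ∅)

/-- The pedigree graph `G_n^{AB}`, as a graph on `ℕ` (non-vertices are isolated). -/
def pedigreeGraph (a b : InfCycle) (n : ℕ) : SimpleGraph ℕ where
  Adj k m := isVertex a b n k ∧ isVertex a b n m ∧
    ((k < m ∧ edgeCond a b k m) ∨ (m < k ∧ edgeCond a b m k))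
  symm := ⟨fun k m ⟨h1, h2, h3⟩ => ⟨h2, h1, h3.symm⟩⟩
  loopless := ⟨fun k h => by rcases h.2.2 with ⟨h', _⟩ | ⟨h', _⟩ <;> exact absurd h' (lt_irrefl k)⟩

/-- The vertex set of the pedigree graph `G_n^{AB}`. -/
def vertexSet (a b : InfCycle) (n : ℕ) : Set ℕ := {k | isVertex a b n k}

/-- The pedigree graph `G_n^{AB}` on its vertex set. -/
def pGraph (a b : InfCycle) (n : ℕ) : SimpleGraph (vertexSet a b n) :=
  (pedigreeGraph a b n).induce (vertexSet a b n)

/-- The pedigree graph `G_n^{AB}` is connected. -/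
def pConnected (a b : InfCycle) (n : ℕ) : Prop := (pGraph a b n).Connected

/-- `T_n`: the number of connected components of the pedigree graph `G_n^{AB}`. -/
noncomputable def Tnum (a b : InfCycle) (n : ℕ) : ℕ :=
  Nat.card (pGraph a b n).ConnectedComponent

/-- `I_n`: at time `n`, the node `n` is added to the pedigree graph as an isolated vertex. -/
def isolatedAt (a b : InfCycle) (n : ℕ) : Prop :=
  isVertex a b n n ∧ ∀ k, ¬ (pedigreeGraph a b n).Adj n k

/-- The event that the first `m` coordinates (`c_3, …, c_{m+2}`) agree with those of `b₀`. -/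
def prefixEvent (b₀ : InfCycle) (m : ℕ) : Set InfCycle := {b | ∀ j, j < m → b j = b₀ j}

/-- `μ` is the distribution of a random infinite cycle: the product over `n ≥ 3` of the
uniform measures on `{1,…,n}`.  (This property determines `μ` uniquely.) -/
def IsCycleMeasure (μ : Measure InfCycle) : Prop :=
  IsProbabilityMeasure μ ∧
    ∀ (b₀ : InfCycle) (m : ℕ),
      μ (prefixEvent b₀ m) = ∏ j ∈ Finset.range m, ((j + 3 : ℕ) : ENNReal)⁻¹

/-- An Alice strategy: her choice at each time depends only on Bob's earlier choices. -/
structure AliceStrategy where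
  play : InfCycle → InfCycle
  adapted : ∀ (b b' : InfCycle) (i : ℕ), (∀ j, j < i → b j = b' j) → play b i = play b' i

/-- `S_n = |E(A_n) ∩ E(B_n)|`. -/
def Sval (a b : InfCycle) (n : ℕ) : ℕ := (cycleEdges a n ∩ cycleEdges b n).card

/-- `S*_n`: the number of common edges not incident on `ν_A(n+1)`. -/
def Sstar (a b : InfCycle) (n : ℕ) : ℕ :=
  ((cycleEdges a n ∩ cycleEdges b n).filter (fun e => e ∩ nuSet a (n + 1) = ∅)).card

/-- `R_n`: the number of edges of `B_n` that are not common and not incident on `ν_A(n+1)`. -/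
def Rval (a b : InfCycle) (n : ℕ) : ℕ :=
  ((cycleEdges b n \ cycleEdges a n).filter (fun e => e ∩ nuSet a (n + 1) = ∅)).card

/-- Alice's move at time `m` is a d-move: `ν_A(m) ∉ E^∩_{m-1}`. -/
def dMoveAt (a b : InfCycle) (m : ℕ) : Prop := nuSet a m ∉ cycleEdges b (m - 1)

/-- `Y`: the total number of times an isolated vertex is created in the pedigree graph. -/
noncomputable def Yval (a b : InfCycle) : ENNReal :=
  ∑' m : ℕ, Set.indicator {x : ℕ | isolatedAt a b x} (fun _ => 1) m

/-! Inserting node `n + 1` into the edge `ν(n + 1) = {x, y}` of `A_n` deletes that edge for good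
and gives `n + 1` its only two smaller neighbours `x` and `y`. Hence `ν` is injective on `k ≥ 4`,
and whenever `{x, y}` with `x < y` is an edge of some later cycle, `x ∈ ν(y)`. On the level of
node lists, rotating `A_n` to start at `ν⁺(n + 1)` turns the insertion into a cons.

A past neighbour `k` of `m` is joined to it by an edge from `A` to `B` (type 1 or 2) or from `B`
to `A`, and there is at most one past partner of each kind. Two type-1 partners have the same
`ν_B`, two type-2 partners both equal `max ν_A(m)`, and a type-1 partner `k₁` excludes a type-2
partner `k₂`: then `ν_A(m) = {x, k₂} = ν_B(k₁)` is an edge of `B_{k₁-1}`, so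
`x ∈ ν_B(k₂) ∩ ν_A(m)`. -/

theorem List.zipWith_cons_append_singleton {α β : Type*} (f : α → α → β) (x z : α)
    (t : List α) :
    (x :: t).zipWith f (t ++ [z]) =
      (x :: t).zipWith f t ++ [f ((x :: t).getLast (List.cons_ne_nil x t)) z] := by
  induction t generalizing x with
  | nil => rfl
  | cons y t ih => simp [ih]

theorem List.mem_or_mem_of_mem_zipWith_pair {α : Type*} [DecidableEq α] {l l' : List α}
    {e : Finset α} {y : α} (he : e ∈ l.zipWith (fun x y => ({x, y} : Finset α)) l')
    (hy : y ∈ e) : y ∈ l ∨ y ∈ l' := by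
  rw [← List.map_uncurry_zip_eq_zipWith] at he
  obtain ⟨⟨a, b⟩, hab, rfl⟩ := List.mem_map.mp he
  rcases Finset.mem_insert.mp hy with rfl | hy
  · exact Or.inl (List.of_mem_zip hab).1
  · exact Or.inr (Finset.mem_singleton.mp hy ▸ (List.of_mem_zip hab).2)

theorem List.rotate_insertIdx {α : Type*} {l : List α} {p : ℕ} (v : α) (hp : p ≤ l.length) :
    (l.insertIdx p v).rotate p = v :: l.rotate p := by
  obtain ⟨l₁, l₂, rfl, rfl, h⟩ := List.exists_of_modifyTailIdx (List.cons v) hp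
  rw [List.insertIdx, h, List.rotate_append_length_eq, List.rotate_append_length_eq]
  rfl

theorem List.idxOf_eq_of_rotate_eq_cons {α : Type*} [BEq α] [LawfulBEq α] {l t : List α}
    {i : ℕ} {x : α} (hl : l.Nodup) (hi : i < l.length) (h : l.rotate i = x :: t) :
    l.idxOf x = i := by
  have hx : l[i]? = some x := by rw [← List.head?_rotate hi, h]; rfl
  obtain ⟨_, hx⟩ := List.getElem?_eq_some_iff.mp hx
  rw [← hx, hl.idxOf_getElem]

def pathEdges (l : List ℕ) : List (Finset ℕ) :=
  l.zipWith (fun x y => ({x, y} : Finset ℕ)) l.tail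

theorem pathEdges_cons_cons (v x : ℕ) (t : List ℕ) :
    pathEdges (v :: x :: t) = {v, x} :: pathEdges (x :: t) :=
  rfl

theorem edgeList_cons (x : ℕ) (t : List ℕ) :
    edgeList (x :: t) = pathEdges (x :: t) ++ [{(x :: t).getLast (List.cons_ne_nil x t), x}] := by
  simp only [edgeList, pathEdges, List.rotate_cons_succ, List.rotate_zero, List.tail_cons]
  exact List.zipWith_cons_append_singleton _ x x t

theorem mem_edgeList_rotate {l : List ℕ} {k : ℕ} {e : Finset ℕ} :
    e ∈ edgeList (l.rotate k) ↔ e ∈ edgeList l := by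
  rw [edgeList, edgeList, List.rotate_rotate, add_comm, ← List.rotate_rotate,
    ← List.zipWith_rotate_distrib _ _ _ _ (l.length_rotate 1).symm, List.mem_rotate]

theorem mem_of_mem_of_mem_edgeList {l : List ℕ} {e : Finset ℕ} {y : ℕ} (he : e ∈ edgeList l)
    (hy : y ∈ e) : y ∈ l :=
  (List.mem_or_mem_of_mem_zipWith_pair he hy).elim id List.mem_rotate.mp

theorem pair_getLast_notMem_pathEdges {x : ℕ} {t : List ℕ} (hnd : (x :: t).Nodup)
    (ht : 2 ≤ t.length) :
    {x, (x :: t).getLast (List.cons_ne_nil x t)} ∉ pathEdges (x :: t) := by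
  obtain ⟨y, s, rfl⟩ := List.exists_cons_of_length_pos (by omega : 0 < t.length)
  have hs : s ≠ [] := List.ne_nil_of_length_pos (by simp at ht; omega)
  obtain ⟨⟨hxy, hxs⟩, hys, -⟩ : (x ≠ y ∧ x ∉ s) ∧ y ∉ s ∧ s.Nodup := by
    simpa using hnd
  have hlast : (x :: y :: s).getLast (List.cons_ne_nil x _) ∈ s := by
    rw [List.getLast_cons (List.cons_ne_nil y s), List.getLast_cons hs]
    exact List.getLast_mem hs
  rw [pathEdges_cons_cons, List.mem_cons]
  rintro (h | h)
  · rcases Finset.mem_insert.mp (h ▸ Finset.mem_insert_of_mem (Finset.mem_singleton_self _))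
      with h' | h'
    · exact hxs (h' ▸ hlast)
    · exact hys (Finset.mem_singleton.mp h' ▸ hlast)
  · rcases List.mem_or_mem_of_mem_zipWith_pair h (Finset.mem_insert_self x _) with h' | h'
    · exact (List.mem_cons.mp h').elim hxy hxs
    · exact hxs h'

theorem cyclicNext_eq_of_rotate_eq_cons {l t : List ℕ} {i x y : ℕ} (hl : l.Nodup)
    (hi : i < l.length) (h : l.rotate i = x :: y :: t) : cyclicNext l x = y := by
  have hlen : 1 < l.length := by rw [← List.length_rotate l i, h]; simp
  have hy : l[(1 + i) % l.length]? = some y := by rw [← List.getElem?_rotate hlen, h]; rfl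
  rw [cyclicNext, List.idxOf_eq_of_rotate_eq_cons hl hi h, List.getD_eq_getElem?_getD,
    List.getElem?_rotate hi, add_comm, hy]
  rfl

theorem cyclicPrev_eq_of_rotate_eq_cons {l t : List ℕ} {i x : ℕ} (hl : l.Nodup)
    (hi : i < l.length) (h : l.rotate i = x :: t) (ht : t ≠ []) :
    cyclicPrev l x = t.getLast ht := by
  have hlen : l.length = t.length + 1 := by rw [← List.length_rotate l i, h]; simp
  have hlast : l[(t.length + i) % l.length]? = some (t.getLast ht) := by
    rw [← List.getElem?_rotate (by omega), h, ← List.getLast_cons (a := x) ht,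
      List.getLast_eq_getElem]
    simp
  rw [cyclicPrev, List.idxOf_eq_of_rotate_eq_cons hl hi h, List.getD_eq_getElem?_getD,
    List.getElem?_rotate (by simpa using hi), show i + (l.length - 1) = t.length + i by omega,
    hlast]
  rfl

section InfCycle

variable (c : InfCycle) {n k : ℕ}

theorem listOf_succ (hn : 3 ≤ n) :
    listOf c (n + 1) = (listOf c n).insertIdx ((c (n - 3)).val + 1) (n + 1) := by
  obtain ⟨N, rfl⟩ := Nat.exists_eq_add_of_le' hn
  rfl

theorem length_listOf (hn : 3 ≤ n) : (listOf c n).length = n := by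
  induction n, hn using Nat.le_induction with
  | base => rfl
  | succ n hn ih =>
    rw [listOf_succ c hn,
      List.length_insertIdx_of_le_length (by have := (c (n - 3)).isLt; omega), ih]

theorem le_of_mem_listOf (hn : 3 ≤ n) {x : ℕ} (hx : x ∈ listOf c n) : x ≤ n := by
  induction n, hn using Nat.le_induction generalizing x with
  | base =>
    change x ∈ [1, 2, 3] at hx
    simp only [List.mem_cons, List.not_mem_nil, or_false] at hx
    omega
  | succ n hn ih =>
    rw [listOf_succ c hn] at hx
    rcases List.eq_or_mem_of_mem_insertIdx hx with rfl | hx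
    · rfl
    · exact (ih hx).trans n.le_succ

theorem nodup_listOf (hn : 3 ≤ n) : (listOf c n).Nodup := by
  induction n, hn using Nat.le_induction with
  | base => show [1, 2, 3].Nodup; decide
  | succ n hn ih =>
    have hp : (c (n - 3)).val + 1 ≤ (listOf c n).length := by
      rw [length_listOf c hn]; have := (c (n - 3)).isLt; omega
    rw [listOf_succ c hn, (List.perm_insertIdx _ _ hp).nodup_iff, List.nodup_cons]
    exact ⟨fun h => by have := le_of_mem_listOf c hn h; omega, ih⟩

theorem exists_rotate_listOf (hn : 3 ≤ n) :
    ∃ p x t, 2 ≤ t.length ∧ (listOf c n).rotate p = x :: t ∧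
      (listOf c (n + 1)).rotate p = (n + 1) :: x :: t ∧
      nuPlus c (n + 1) = x ∧ nuMinus c (n + 1) = (x :: t).getLast (List.cons_ne_nil x t) := by
  set p := (c (n - 3)).val + 1
  have hp : p ≤ (listOf c n).length := by
    rw [length_listOf c hn]; have := (c (n - 3)).isLt; omega
  obtain ⟨x, t, hr⟩ := List.exists_cons_of_ne_nil (l := (listOf c n).rotate p)
    (by simp [← List.length_pos_iff, length_listOf c hn]; omega)
  have ht : t.length + 1 = n := by
    rw [← length_listOf c hn, ← List.length_rotate (listOf c n) p, hr]; rfl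
  have hr' : (listOf c (n + 1)).rotate p = (n + 1) :: x :: t := by
    rw [listOf_succ c hn, List.rotate_insertIdx _ hp, hr]
  have hnd := nodup_listOf c (n.le_succ.trans' hn)
  have hpn : p < (listOf c (n + 1)).length := by rw [length_listOf c (by omega)]; omega
  refine ⟨p, x, t, by omega, hr, hr', ?_, ?_⟩
  · rw [nuPlus, if_neg (by omega), if_neg (by omega)]
    exact cyclicNext_eq_of_rotate_eq_cons hnd hpn hr'
  · rw [nuMinus, if_neg (by omega), if_neg (by omega)]
    exact cyclicPrev_eq_of_rotate_eq_cons hnd hpn hr' _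

theorem mem_cycleEdges_succ (hn : 3 ≤ n) {e : Finset ℕ} (he : e ∈ cycleEdges c (n + 1)) :
    e = {n + 1, nuPlus c (n + 1)} ∨ e = {nuMinus c (n + 1), n + 1} ∨
      (e ∈ cycleEdges c n ∧ e ≠ nuSet c (n + 1)) := by
  obtain ⟨p, x, t, ht, hr, hr', hplus, hminus⟩ := exists_rotate_listOf c hn
  have hnd : (x :: t).Nodup := hr ▸ List.nodup_rotate.mpr (nodup_listOf c hn)
  rw [cycleEdges, List.mem_toFinset, ← mem_edgeList_rotate (k := p), hr', edgeList_cons,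
    List.getLast_cons (List.cons_ne_nil x t), pathEdges_cons_cons, List.mem_append,
    List.mem_cons, List.mem_singleton] at he
  rw [nuSet, hplus, hminus]
  rcases he with (h | h) | h
  · exact Or.inl h
  · refine Or.inr (Or.inr ⟨?_, ?_⟩)
    · rw [cycleEdges, List.mem_toFinset, ← mem_edgeList_rotate (k := p), hr, edgeList_cons]
      exact List.mem_append_left _ h
    · rintro rfl
      exact pair_getLast_notMem_pathEdges hnd ht h
  · exact Or.inr (Or.inl h)

theorem nuSet_mem_cycleEdges (hn : 3 ≤ n) : nuSet c (n + 1) ∈ cycleEdges c n := by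
  obtain ⟨p, x, t, -, hr, -, hplus, hminus⟩ := exists_rotate_listOf c hn
  rw [nuSet, hplus, hminus, cycleEdges, List.mem_toFinset, ← mem_edgeList_rotate (k := p), hr,
    edgeList_cons, Finset.pair_comm]
  exact List.mem_append_right _ (List.mem_singleton_self _)

theorem nuPlus_ne_nuMinus (hn : 3 ≤ n) : nuPlus c (n + 1) ≠ nuMinus c (n + 1) := by
  obtain ⟨p, x, t, ht, hr, -, hplus, hminus⟩ := exists_rotate_listOf c hn
  have hnd : (x :: t).Nodup := hr ▸ List.nodup_rotate.mpr (nodup_listOf c hn)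
  have hne : t ≠ [] := List.ne_nil_of_length_pos (by omega)
  rw [hplus, hminus, List.getLast_cons hne]
  exact fun h => (List.nodup_cons.mp hnd).1 (h ▸ List.getLast_mem hne)

theorem le_of_mem_of_mem_cycleEdges (hn : 3 ≤ n) {e : Finset ℕ} (he : e ∈ cycleEdges c n)
    {y : ℕ} (hy : y ∈ e) : y ≤ n :=
  le_of_mem_listOf c hn (mem_of_mem_of_mem_edgeList (List.mem_toFinset.mp he) hy)

theorem mem_cycleEdges_of_mem_cycleEdges_succ (hn : 3 ≤ n) {e : Finset ℕ}
    (he : e ∈ cycleEdges c (n + 1)) (hv : n + 1 ∉ e) :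
    e ∈ cycleEdges c n ∧ e ≠ nuSet c (n + 1) := by
  rcases mem_cycleEdges_succ c hn he with rfl | rfl | h
  · simp at hv
  · simp at hv
  · exact h

theorem mem_nuSet_of_pair_mem_cycleEdges_succ (hn : 3 ≤ n) {x : ℕ} (hx : x ≠ n + 1)
    (he : {x, n + 1} ∈ cycleEdges c (n + 1)) : x ∈ nuSet c (n + 1) := by
  rcases mem_cycleEdges_succ c hn he with h | h | ⟨h, -⟩
  · have hx' : x ∈ ({n + 1, nuPlus c (n + 1)} : Finset ℕ) := by rw [← h]; simp
    simp only [nuSet, Finset.mem_insert, Finset.mem_singleton] at hx' ⊢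
    omega
  · have hx' : x ∈ ({nuMinus c (n + 1), n + 1} : Finset ℕ) := by rw [← h]; simp
    simp only [nuSet, Finset.mem_insert, Finset.mem_singleton] at hx' ⊢
    omega
  · have := le_of_mem_of_mem_cycleEdges c hn h (y := n + 1) (by simp)
    omega

theorem lt_of_mem_nuSet (hk : 4 ≤ k) {x : ℕ} (hx : x ∈ nuSet c k) : x < k := by
  obtain ⟨n, rfl⟩ : ∃ n, k = n + 1 := ⟨k - 1, by omega⟩
  exact Nat.lt_succ_of_le
    (le_of_mem_of_mem_cycleEdges c (by omega) (nuSet_mem_cycleEdges c (by omega)) hx)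

theorem nuSet_notMem_cycleEdges (hk : 4 ≤ k) {t : ℕ} (ht : k ≤ t) :
    nuSet c k ∉ cycleEdges c t := by
  induction t, ht using Nat.le_induction with
  | base =>
    obtain ⟨n, rfl⟩ : ∃ n, k = n + 1 := ⟨k - 1, by omega⟩
    exact fun he => (mem_cycleEdges_of_mem_cycleEdges_succ c (by omega) he
      fun h => (lt_of_mem_nuSet c hk h).false).2 rfl
  | succ t ht ih =>
    exact fun he => ih (mem_cycleEdges_of_mem_cycleEdges_succ c (by omega) he
      fun h => by have := lt_of_mem_nuSet c hk h; omega).1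

theorem nuSet_injOn : Set.InjOn (nuSet c) (Set.Ici 4) := by
  have hne : ∀ {k k' : ℕ}, 4 ≤ k → k < k' → nuSet c k ≠ nuSet c k' :=
    fun {k k'} hk hlt h => by
      obtain ⟨n, rfl⟩ : ∃ n, k' = n + 1 := ⟨k' - 1, by omega⟩
      exact nuSet_notMem_cycleEdges c hk (by omega) (h ▸ nuSet_mem_cycleEdges c (by omega))
  intro k hk k' hk' h
  rcases lt_trichotomy k k' with hlt | heq | hlt
  exacts [(hne hk hlt h).elim, heq, (hne hk' hlt h.symm).elim]

theorem mem_nuSet_of_pair_mem_cycleEdges {x : ℕ} (hxk : x < k) (hk : 4 ≤ k) {t : ℕ}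
    (ht : k ≤ t) (he : {x, k} ∈ cycleEdges c t) : x ∈ nuSet c k := by
  induction t, ht using Nat.le_induction with
  | base =>
    obtain ⟨n, rfl⟩ : ∃ n, k = n + 1 := ⟨k - 1, by omega⟩
    exact mem_nuSet_of_pair_mem_cycleEdges_succ c (by omega) hxk.ne he
  | succ t ht ih =>
    exact ih (mem_cycleEdges_of_mem_cycleEdges_succ c (by omega) he (by simp; omega)).1

end InfCycle

/-- `m` is joined to the older vertex `k` by an edge of type 1 or type 2 from `a` to `b`. -/
def IsABEdge (a b : InfCycle) (k m : ℕ) : Prop :=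
  nuSet a m = nuSet b k ∨ (k = max (nuPlus a m) (nuMinus a m) ∧ nuSet b k ∩ nuSet a m = ∅)

theorem edgeCond_iff (a b : InfCycle) (k m : ℕ) :
    edgeCond a b k m ↔ IsABEdge a b k m ∨ IsABEdge b a k m := by
  unfold edgeCond IsABEdge
  tauto

theorem min_mem_nuSet_of_nuSet_eq (a b : InfCycle) {m k k' : ℕ} (hm : 4 ≤ m) (hk : 4 ≤ k)
    (hk' : 4 ≤ k') (h : nuSet a m = nuSet b k) (h' : k' = max (nuPlus a m) (nuMinus a m)) :
    min (nuPlus a m) (nuMinus a m) ∈ nuSet b k' := by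
  obtain ⟨n, rfl⟩ : ∃ n, m = n + 1 := ⟨m - 1, by omega⟩
  have hne := nuPlus_ne_nuMinus a (n := n) (by omega)
  have hpair : nuSet b k = {min (nuPlus a (n + 1)) (nuMinus a (n + 1)), k'} := by
    rw [← h, h', nuSet]
    rcases le_total (nuPlus a (n + 1)) (nuMinus a (n + 1)) with hle | hle
    · rw [min_eq_left hle, max_eq_right hle]
    · rw [min_eq_right hle, max_eq_left hle, Finset.pair_comm]
  obtain ⟨N, rfl⟩ : ∃ N, k = N + 1 := ⟨k - 1, by omega⟩
  have hk'k : k' < N + 1 := lt_of_mem_nuSet b hk (by rw [hpair]; simp)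
  refine mem_nuSet_of_pair_mem_cycleEdges b (by omega) hk' (t := N) (by omega) ?_
  rw [← hpair]
  exact nuSet_mem_cycleEdges b (by omega)

theorem eq_of_isABEdge (a b : InfCycle) {m k k' : ℕ} (hm : 4 ≤ m) (hk : 4 ≤ k)
    (hk' : 4 ≤ k') (h : IsABEdge a b k m) (h' : IsABEdge a b k' m) : k = k' := by
  have hmin : min (nuPlus a m) (nuMinus a m) ∈ nuSet a m := by
    rcases min_choice (nuPlus a m) (nuMinus a m) with he | he <;> simp [nuSet, he]
  have type1_excludes_type2 : ∀ {k k' : ℕ}, 4 ≤ k → 4 ≤ k' → nuSet a m = nuSet b k →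
      k' = max (nuPlus a m) (nuMinus a m) → nuSet b k' ∩ nuSet a m ≠ ∅ :=
    fun hk hk' h h' => Finset.nonempty_iff_ne_empty.mp
      ⟨_, Finset.mem_inter.mpr ⟨min_mem_nuSet_of_nuSet_eq a b hm hk hk' h h', hmin⟩⟩
  rcases h with h | ⟨h, hd⟩ <;> rcases h' with h' | ⟨h', hd'⟩
  · exact nuSet_injOn b hk hk' (h.symm.trans h')
  · exact (type1_excludes_type2 hk hk' h h' hd').elim
  · exact (type1_excludes_type2 hk' hk h' h hd).elim
  · exact h.trans h'.symm

theorem setOf_isABEdge_subsingleton (a b : InfCycle) {m : ℕ} (hm : 4 ≤ m) :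
    {k | 4 ≤ k ∧ IsABEdge a b k m}.Subsingleton :=
  fun _ ⟨hk, h⟩ _ ⟨hk', h'⟩ => eq_of_isABEdge a b hm hk hk' h h'

theorem setOf_adj_lt_subset (a b : InfCycle) (n m : ℕ) :
    {k | (pedigreeGraph a b n).Adj m k ∧ k < m} ⊆
      {k | 4 ≤ k ∧ IsABEdge a b k m} ∪ {k | 4 ≤ k ∧ IsABEdge b a k m} := by
  rintro k ⟨⟨-, hk, (⟨hmk, -⟩ | ⟨-, h⟩)⟩, hkm⟩
  · omega
  · exact ((edgeCond_iff a b k m).mp h).imp (And.intro hk.1) (And.intro hk.1)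

/-- Every vertex of a pedigree graph has at most 2 neighbors smaller
than itself (at most 2 edges to vertices created in the past). -/
theorem pedigree_graph_past_degree_le_two (a b : InfCycle) (n m : ℕ) :
    {k : ℕ | (pedigreeGraph a b n).Adj m k ∧ k < m}.Finite ∧
    {k : ℕ | (pedigreeGraph a b n).Adj m k ∧ k < m}.ncard ≤ 2 := by
  rcases lt_or_ge m 4 with hm | hm
  · have hempty : {k : ℕ | (pedigreeGraph a b n).Adj m k ∧ k < m} = ∅ :=
      Set.eq_empty_of_forall_notMem fun k hk => by have := hk.1.1.1; omega
    simp [hempty]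
  have hA := setOf_isABEdge_subsingleton a b hm
  have hB := setOf_isABEdge_subsingleton b a hm
  have hfin := hA.finite.union hB.finite
  refine ⟨hfin.subset (setOf_adj_lt_subset a b n m), ?_⟩
  calc _ ≤ _ := Set.ncard_le_ncard (setOf_adj_lt_subset a b n m) hfin
    _ ≤ _ := Set.ncard_union_le _ _
    _ ≤ 1 + 1 := add_le_add ((Set.ncard_le_one hA.finite).mpr fun _ hx _ hy => hA hx hy)
        ((Set.ncard_le_one hB.finite).mpr fun _ hx _ hy => hB hx hy)
end

section
/- Let A and B be infinite cycles, n ≥ 5, and let C be a connected component of the pedigree graph G_{n−1}^{AB}. Then there exists a vertex k ∈ C (namely k = max V(C)) such that for every choice a ∈ {1,…,n−1} of the edge of A_{n−1} into which Alice inserts her node n, there is a choice b ∈ {1,…,n−1} of the edge of B_{n−1} into which Bob inserts his node n for which, in the resulting pedigree graph G_n, the node n is a vertex and is adjacent to k. -/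
open MeasureTheory

/-!
Take `k = max V(C)` and a node `u ∈ ν_B(k) \ ν_A(k)` (both are 2-sets and differ); then `u < k`.
In every `A_t` the neighbours of `k` smaller than `k` lie in `ν_A(k)`, so `{k, u}` is never an
edge of `A`. In `B` the edge `{k, u}` survives up to time `n - 1`: a node `z` subdividing it has
`ν_B(z) = {k, u} ≠ ν_A(z)`, so it would be a vertex with `max ν_B(z) = k` and
`ν_A(k) ∩ ν_B(z) = ∅`, a type-2 B→A neighbour of `k` larger than `k` in `C`. Bob inserts `n`
into `{k, u}`; since this is not an edge of `A_{n-1}`, node `n` is a vertex, and the same type-2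
condition joins it to `k`.
-/

namespace Pedigree

def nth (l : List ℕ) (i : ℕ) : ℕ := l.getD (i % l.length) 0

def edge (l : List ℕ) (i : ℕ) : Finset ℕ := {nth l i, nth l (i + 1)}

section CyclicList

variable {l : List ℕ} {i j z : ℕ}

lemma nth_of_lt (h : i < l.length) : nth l i = l[i] := by
  rw [nth, Nat.mod_eq_of_lt h, List.getD_eq_getElem]

lemma nth_add_length (l : List ℕ) (i : ℕ) : nth l (i + l.length) = nth l i := by
  rw [nth, nth, Nat.add_mod_right]

lemma nth_mem (h : l ≠ []) (i : ℕ) : nth l i ∈ l := by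
  have h0 : 0 < l.length := List.length_pos_iff.2 h
  rw [nth, List.getD_eq_getElem _ _ (Nat.mod_lt _ h0)]
  exact List.getElem_mem _

lemma nth_ne_nth_succ (hl : l.Nodup) (h2 : 2 ≤ l.length) (hi : i < l.length) :
    nth l i ≠ nth l (i + 1) := by
  rw [nth_of_lt hi]
  rcases Nat.lt_or_ge (i + 1) l.length with h | h
  · rw [nth_of_lt h, Ne, hl.getElem_inj_iff]
    omega
  · rw [show i + 1 = 0 + l.length by omega, nth_add_length, nth_of_lt (by omega), Ne,
      hl.getElem_inj_iff]
    omega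

lemma mem_edgeList_iff {e : Finset ℕ} : e ∈ edgeList l ↔ ∃ i < l.length, edge l i = e := by
  have hlen : (edgeList l).length = l.length := by simp [edgeList]
  have hget (i : ℕ) (hi : i < (edgeList l).length) : (edgeList l)[i] = edge l i := by
    have h0 : 0 < l.length := by omega
    rw [edge, nth_of_lt (hlen ▸ hi), nth, List.getD_eq_getElem _ _ (Nat.mod_lt _ h0)]
    simp only [edgeList, List.getElem_zipWith, List.getElem_rotate]
  rw [List.mem_iff_getElem]
  constructor
  · rintro ⟨i, hi, rfl⟩
    exact ⟨i, hlen ▸ hi, (hget i hi).symm⟩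
  · rintro ⟨i, hi, rfl⟩
    exact ⟨i, hlen ▸ hi, hget i _⟩

lemma mem_of_mem_edgeList {e : Finset ℕ} {x : ℕ} (he : e ∈ edgeList l) (hx : x ∈ e) :
    x ∈ l := by
  obtain ⟨i, hi, rfl⟩ := mem_edgeList_iff.1 he
  have hl : l ≠ [] := List.ne_nil_of_length_pos (by omega)
  rw [edge, Finset.mem_insert, Finset.mem_singleton] at hx
  rcases hx with rfl | rfl <;> exact nth_mem hl _

lemma cyclicNext_getElem (hl : l.Nodup) (hi : i < l.length) :
    cyclicNext l l[i] = nth l (i + 1) := by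
  rw [cyclicNext, hl.idxOf_getElem, List.getD_eq_getElem _ _ (by simpa using hi),
    List.getElem_rotate, nth, List.getD_eq_getElem]

lemma cyclicPrev_getElem (hl : l.Nodup) (hi : i < l.length) :
    cyclicPrev l l[i] = nth l (i + (l.length - 1)) := by
  rw [cyclicPrev, hl.idxOf_getElem, List.getD_eq_getElem _ _ (by simpa using hi),
    List.getElem_rotate, nth, List.getD_eq_getElem]

lemma length_insertIdx_succ (hj : j < l.length) :
    (l.insertIdx (j + 1) z).length = l.length + 1 :=
  List.length_insertIdx_of_le_length hj _

lemma nth_insertIdx_of_le (hj : j < l.length) (hi : i ≤ j) :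
    nth (l.insertIdx (j + 1) z) i = nth l i := by
  have := length_insertIdx_succ (z := z) hj
  rw [nth_of_lt (by omega), nth_of_lt (by omega), List.getElem_insertIdx_of_lt (by omega)]

lemma nth_insertIdx_self (hj : j < l.length) : nth (l.insertIdx (j + 1) z) (j + 1) = z := by
  have := length_insertIdx_succ (z := z) hj
  rw [nth_of_lt (by omega), List.getElem_insertIdx_self]

lemma nth_insertIdx_succ (hj : j < l.length) (hji : j < i) (hi : i ≤ l.length) :
    nth (l.insertIdx (j + 1) z) (i + 1) = nth l i := by
  have hlen := length_insertIdx_succ (z := z) hj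
  rcases Nat.lt_or_ge i l.length with h | h
  · obtain ⟨d, rfl⟩ : ∃ d, i = j + 1 + d := ⟨i - j - 1, by omega⟩
    rw [nth_of_lt (by omega), nth_of_lt h]
    exact List.getElem_insertIdx_add_succ l z (j + 1) d h
  · rw [show i + 1 = 0 + (l.insertIdx (j + 1) z).length by omega, nth_add_length,
      nth_insertIdx_of_le hj (Nat.zero_le j), show i = 0 + l.length by omega, nth_add_length]

lemma edge_insertIdx_of_lt (hj : j < l.length) (hi : i < j) :
    edge (l.insertIdx (j + 1) z) i = edge l i := by
  rw [edge, edge, nth_insertIdx_of_le hj (by omega), nth_insertIdx_of_le hj (by omega)]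

lemma edge_insertIdx_succ (hj : j < l.length) (hji : j < i) (hi : i < l.length) :
    edge (l.insertIdx (j + 1) z) (i + 1) = edge l i := by
  rw [edge, edge, nth_insertIdx_succ hj hji hi.le, nth_insertIdx_succ hj (by omega) hi]

lemma edge_insertIdx_self (hj : j < l.length) :
    edge (l.insertIdx (j + 1) z) j = {nth l j, z} := by
  rw [edge, nth_insertIdx_of_le hj le_rfl, nth_insertIdx_self hj]

lemma edge_insertIdx_succ_self (hj : j < l.length) :
    edge (l.insertIdx (j + 1) z) (j + 1) = {z, nth l (j + 1)} := by
  rw [edge, nth_insertIdx_self hj, nth_insertIdx_succ hj (by omega) hj]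

lemma mem_edgeList_insertIdx_of_ne {e : Finset ℕ} (hj : j < l.length) (he : e ∈ edgeList l)
    (hne : e ≠ edge l j) : e ∈ edgeList (l.insertIdx (j + 1) z) := by
  have hlen := length_insertIdx_succ (z := z) hj
  obtain ⟨i, hi, rfl⟩ := mem_edgeList_iff.1 he
  rw [mem_edgeList_iff]
  rcases Nat.lt_trichotomy i j with h | rfl | h
  · exact ⟨i, by omega, edge_insertIdx_of_lt hj h⟩
  · exact absurd rfl hne
  · exact ⟨i + 1, by omega, edge_insertIdx_succ hj h hi⟩

lemma mem_edgeList_insertIdx {e : Finset ℕ} (hj : j < l.length)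
    (he : e ∈ edgeList (l.insertIdx (j + 1) z)) :
    e = {nth l j, z} ∨ e = {z, nth l (j + 1)} ∨ e ∈ edgeList l := by
  rw [mem_edgeList_iff, length_insertIdx_succ hj] at he
  obtain ⟨i, hi, rfl⟩ := he
  rcases Nat.lt_trichotomy i j with h | rfl | h
  · exact .inr (.inr (mem_edgeList_iff.2 ⟨i, by omega, (edge_insertIdx_of_lt hj h).symm⟩))
  · exact .inl (edge_insertIdx_self hj)
  · obtain ⟨i, rfl⟩ : ∃ i', i = i' + 1 := ⟨i - 1, by omega⟩
    rcases Nat.lt_or_ge j i with h' | h'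
    · refine .inr (.inr (mem_edgeList_iff.2 ⟨i, by omega, ?_⟩))
      exact (edge_insertIdx_succ hj h' (by omega)).symm
    · obtain rfl : i = j := by omega
      exact .inr (.inl (edge_insertIdx_succ_self hj))

end CyclicList

section ListOf

variable (c : InfCycle) {m : ℕ}

lemma listOf_eq_insertIdx (hm : 4 ≤ m) :
    listOf c m = (listOf c (m - 1)).insertIdx ((c (m - 4)).val + 1) m := by
  obtain ⟨i, rfl⟩ : ∃ i, m = i + 4 := ⟨m - 4, by omega⟩
  rfl

lemma length_listOf (hm : 3 ≤ m) : (listOf c m).length = m := by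
  induction m, hm using Nat.le_induction with
  | base => rfl
  | succ m hm ih =>
    rw [listOf_eq_insertIdx c (by omega), Nat.add_sub_cancel,
      List.length_insertIdx_of_le_length (by have := (c (m + 1 - 4)).isLt; omega), ih]

lemma mem_listOf (hm : 3 ≤ m) {x : ℕ} : x ∈ listOf c m ↔ 1 ≤ x ∧ x ≤ m := by
  induction m, hm using Nat.le_induction with
  | base =>
    simp only [listOf, List.mem_cons, List.not_mem_nil, or_false]
    omega
  | succ m hm ih =>
    rw [listOf_eq_insertIdx c (by omega), Nat.add_sub_cancel, List.mem_insertIdx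
      (by rw [length_listOf c hm]; have := (c (m + 1 - 4)).isLt; omega), ih]
    omega

lemma nodup_listOf (hm : 3 ≤ m) : (listOf c m).Nodup := by
  induction m, hm using Nat.le_induction with
  | base => exact (by decide : [1, 2, 3].Nodup)
  | succ m hm ih =>
    rw [listOf_eq_insertIdx c (by omega), Nat.add_sub_cancel, (List.perm_insertIdx _ _
      (by rw [length_listOf c hm]; have := (c (m + 1 - 4)).isLt; omega)).nodup_iff,
      List.nodup_cons, mem_listOf c hm]
    exact ⟨by omega, ih⟩

lemma choice_lt_length (hm : 4 ≤ m) : (c (m - 4)).val < (listOf c (m - 1)).length := by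
  rw [length_listOf c (by omega)]
  have := (c (m - 4)).isLt
  omega

variable {c}

lemma listOf_congr {c' : InfCycle} :
    ∀ m, (∀ j, j + 4 ≤ m → c j = c' j) → listOf c m = listOf c' m
  | 0, _ | 1, _ | 2, _ | 3, _ => rfl
  | i + 4, h => by
    rw [listOf_eq_insertIdx c (by omega), listOf_eq_insertIdx c' (by omega),
      listOf_congr (i + 4 - 1) fun j hj => h j (by omega), h (i + 4 - 4) (by omega)]

end ListOf

section Nu

variable {c : InfCycle} {m : ℕ}

lemma nuSet_eq_edge (hm : 4 ≤ m) :
    nuSet c m = edge (listOf c (m - 1)) (c (m - 4)) := by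
  set l := listOf c (m - 1)
  set j := (c (m - 4)).val
  have hj : j < l.length := choice_lt_length c hm
  have hlen := length_insertIdx_succ (z := m) hj
  have hL : listOf c m = l.insertIdx (j + 1) m := listOf_eq_insertIdx c hm
  have hnodup : (l.insertIdx (j + 1) m).Nodup := hL ▸ nodup_listOf c (by omega)
  have hm' : m = (l.insertIdx (j + 1) m)[j + 1]'(by omega) :=
    (List.getElem_insertIdx_self _).symm
  have hplus : nuPlus c m = nth l (j + 1) := by
    rw [nuPlus, if_neg (by omega), if_neg (by omega), hL]
    conv_lhs => arg 2; rw [hm']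
    rw [cyclicNext_getElem hnodup, nth_insertIdx_succ hj (by omega) hj]
  have hminus : nuMinus c m = nth l j := by
    rw [nuMinus, if_neg (by omega), if_neg (by omega), hL]
    conv_lhs => arg 2; rw [hm']
    rw [cyclicPrev_getElem hnodup, show j + 1 + ((l.insertIdx (j + 1) m).length - 1)
      = j + (l.insertIdx (j + 1) m).length by omega, nth_add_length, nth_insertIdx_of_le hj le_rfl]
  rw [nuSet, hplus, hminus, edge, Finset.pair_comm]

lemma nuSet_mem_cycleEdges (hm : 4 ≤ m) : nuSet c m ∈ cycleEdges c (m - 1) := by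
  rw [cycleEdges, List.mem_toFinset, mem_edgeList_iff, nuSet_eq_edge hm]
  exact ⟨_, choice_lt_length c hm, rfl⟩

lemma lt_of_mem_nuSet (hm : 4 ≤ m) {x : ℕ} (hx : x ∈ nuSet c m) : x < m := by
  have h := nuSet_mem_cycleEdges (c := c) hm
  rw [cycleEdges, List.mem_toFinset] at h
  have := (mem_listOf c (by omega)).1 (mem_of_mem_edgeList h hx)
  omega

lemma card_nuSet (hm : 4 ≤ m) : (nuSet c m).card = 2 := by
  rw [nuSet_eq_edge hm, edge]
  exact Finset.card_pair (nth_ne_nth_succ (nodup_listOf c (by omega))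
    (by rw [length_listOf c (by omega)]; omega) (choice_lt_length c hm))

lemma nuSet_congr {c' : InfCycle} (h : ∀ j, j + 4 ≤ m → c j = c' j) :
    nuSet c m = nuSet c' m := by
  rw [nuSet, nuSet, nuPlus, nuPlus, nuMinus, nuMinus, listOf_congr m h]

lemma cycleEdges_congr {c' : InfCycle} (h : ∀ j, j + 4 ≤ m → c j = c' j) :
    cycleEdges c m = cycleEdges c' m := by
  rw [cycleEdges, cycleEdges, listOf_congr m h]

lemma mem_cycleEdges_succ_of_ne {t : ℕ} {e : Finset ℕ} (ht : 3 ≤ t)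
    (he : e ∈ cycleEdges c t) (hne : e ≠ nuSet c (t + 1)) : e ∈ cycleEdges c (t + 1) := by
  rw [nuSet_eq_edge (by omega), Nat.add_sub_cancel] at hne
  rw [cycleEdges, List.mem_toFinset] at he ⊢
  rw [listOf_eq_insertIdx c (by omega), Nat.add_sub_cancel]
  exact mem_edgeList_insertIdx_of_ne (choice_lt_length c (m := t + 1) (by omega)) he hne

lemma mem_cycleEdges_of_succ {t : ℕ} {e : Finset ℕ} (ht : 3 ≤ t)
    (he : e ∈ cycleEdges c (t + 1)) (hz : t + 1 ∉ e) : e ∈ cycleEdges c t := by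
  rw [cycleEdges, List.mem_toFinset, listOf_eq_insertIdx c (by omega), Nat.add_sub_cancel] at he
  rw [cycleEdges, List.mem_toFinset]
  rcases mem_edgeList_insertIdx (choice_lt_length c (m := t + 1) (by omega)) he with
    rfl | rfl | he
  · simp at hz
  · simp at hz
  · exact he

lemma pair_mem_cycleEdges_self_iff (hm : 4 ≤ m) {y : ℕ} :
    {m, y} ∈ cycleEdges c m ↔ y ∈ nuSet c m := by
  set l := listOf c (m - 1)
  set j := (c (m - 4)).val
  have hj : j < l.length := choice_lt_length c hm
  have hml (x : ℕ) (hx : x ∈ l) : x ≠ m := by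
    have := (mem_listOf c (by omega)).1 hx
    omega
  have hl : l ≠ [] := List.ne_nil_of_length_pos (by omega)
  have hjm := hml _ (nth_mem hl j)
  have hjm' := hml _ (nth_mem hl (j + 1))
  rw [cycleEdges, List.mem_toFinset, listOf_eq_insertIdx c hm, nuSet_eq_edge hm, edge]
  constructor
  · intro h
    rcases mem_edgeList_insertIdx hj h with h | h | h
    · have : nth l j ∈ ({m, y} : Finset ℕ) := h ▸ Finset.mem_insert_self _ _
      simp only [Finset.mem_insert, Finset.mem_singleton] at this ⊢
      tauto
    · have : nth l (j + 1) ∈ ({m, y} : Finset ℕ) := h ▸ Finset.mem_insert_of_mem (by simp)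
      simp only [Finset.mem_insert, Finset.mem_singleton] at this ⊢
      tauto
    · exact absurd (mem_of_mem_edgeList h (Finset.mem_insert_self m {y})) (hml m · rfl)
  · intro h
    rw [mem_edgeList_iff]
    rw [Finset.mem_insert, Finset.mem_singleton] at h
    rcases h with rfl | rfl
    · exact ⟨j, by rw [length_insertIdx_succ hj]; omega,
        by rw [edge_insertIdx_self hj, Finset.pair_comm]⟩
    · exact ⟨j + 1, by rw [length_insertIdx_succ hj]; omega, edge_insertIdx_succ_self hj⟩

lemma mem_nuSet_or_lt_of_pair_mem_cycleEdges {k t y : ℕ} (hk : 4 ≤ k) (hkt : k ≤ t)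
    (h : {k, y} ∈ cycleEdges c t) : y ∈ nuSet c k ∨ k < y := by
  induction t, hkt using Nat.le_induction with
  | base => exact .inl ((pair_mem_cycleEdges_self_iff hk).1 h)
  | succ t hkt ih =>
    by_cases hy : y = t + 1
    · exact .inr (by omega)
    · refine ih (mem_cycleEdges_of_succ (by omega) h ?_)
      simp only [Finset.mem_insert, Finset.mem_singleton]
      omega

lemma exists_nuSet_eq_of_mem_cycleEdges (hm : 4 ≤ m) {e : Finset ℕ}
    (he : e ∈ cycleEdges c (m - 1)) :
    ∃ c' : InfCycle, (∀ j, j < m - 4 → c' j = c j) ∧ nuSet c' m = e := by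
  rw [cycleEdges, List.mem_toFinset, mem_edgeList_iff, length_listOf c (by omega)] at he
  obtain ⟨i, hi, rfl⟩ := he
  let c' := Function.update c (m - 4) ⟨i, by omega⟩
  have hc' (j : ℕ) (hj : j < m - 4) : c' j = c j := Function.update_of_ne (by omega) _ _
  refine ⟨c', hc', ?_⟩
  rw [nuSet_eq_edge hm, listOf_congr (m - 1) fun j hj => hc' j (by omega)]
  simp [c']

end Nu

section PedigreeGraph

variable {a b : InfCycle}

lemma eq_max_of_nuSet_eq_pair {c : InfCycle} {z k u : ℕ} (h : nuSet c z = {k, u}) (hu : u < k) :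
    k = max (nuPlus c z) (nuMinus c z) := by
  have hp : nuPlus c z ∈ ({k, u} : Finset ℕ) := h ▸ Finset.mem_insert_self _ _
  have hm : nuMinus c z ∈ ({k, u} : Finset ℕ) := h ▸ Finset.mem_insert_of_mem (by simp)
  have hk : k ∈ nuSet c z := h ▸ Finset.mem_insert_self _ _
  simp only [nuSet, Finset.mem_insert, Finset.mem_singleton] at hp hm hk
  omega

lemma edgeCond_of_nuSet_eq_pair {k u z : ℕ} (hk : 4 ≤ k) (hu : u < k) (hua : u ∉ nuSet a k)
    (hz : nuSet b z = {k, u}) : edgeCond a b k z := by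
  refine .inr (.inr (.inr ⟨eq_max_of_nuSet_eq_pair hz hu, ?_⟩))
  rw [hz, Finset.eq_empty_iff_forall_notMem]
  intro x hx
  rw [Finset.mem_inter, Finset.mem_insert, Finset.mem_singleton] at hx
  obtain ⟨hxa, rfl | rfl⟩ := hx
  · exact (lt_of_mem_nuSet hk hxa).false
  · exact hua hxa

lemma exists_mem_nuSet_notMem {k : ℕ} (hk : 4 ≤ k) (h : nuSet a k ≠ nuSet b k) :
    ∃ u ∈ nuSet b k, u ∉ nuSet a k := by
  by_contra! hsub
  exact h (Finset.eq_of_subset_of_card_le hsub (by rw [card_nuSet hk, card_nuSet hk])).symm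

lemma pair_mem_cycleEdges_of_forall_not_edgeCond {k u N : ℕ} (hk : 4 ≤ k) (hkN : k ≤ N)
    (hub : u ∈ nuSet b k) (hua : u ∉ nuSet a k)
    (hmax : ∀ z, k < z → isVertex a b N z → ¬ edgeCond a b k z) :
    {k, u} ∈ cycleEdges b N := by
  have hu : u < k := lt_of_mem_nuSet hk hub
  suffices ∀ t, k ≤ t → t ≤ N → {k, u} ∈ cycleEdges b t from this N hkN le_rfl
  intro t hkt
  induction t, hkt using Nat.le_induction with
  | base => exact fun _ => (pair_mem_cycleEdges_self_iff hk).2 hub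
  | succ t hkt ih =>
    intro htN
    refine mem_cycleEdges_succ_of_ne (by omega) (ih (by omega)) fun heq => ?_
    by_cases hab : nuSet a (t + 1) = nuSet b (t + 1)
    · have hA := nuSet_mem_cycleEdges (c := a) (m := t + 1) (by omega)
      rw [Nat.add_sub_cancel, hab, ← heq] at hA
      rcases mem_nuSet_or_lt_of_pair_mem_cycleEdges hk hkt hA with h | h
      · exact hua h
      · omega
    · exact hmax (t + 1) (by omega) ⟨by omega, htN, hab⟩
        (edgeCond_of_nuSet_eq_pair hk hu hua heq.symm)

lemma exists_greatest_mem_connectedComponent {N : ℕ} (C : (pGraph a b N).ConnectedComponent) :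
    ∃ (k : ℕ) (hk : k ∈ vertexSet a b N),
      (pGraph a b N).connectedComponentMk ⟨k, hk⟩ = C ∧ ∀ z, k < z → isVertex a b N z → ¬ edgeCond a b k z := by
  classical
  let P : ℕ → Prop := fun m =>
    ∃ h : m ∈ vertexSet a b N, (pGraph a b N).connectedComponentMk ⟨m, h⟩ = C
  obtain ⟨v, hv⟩ := C.exists_rep
  obtain ⟨hk, hkC⟩ : P (Nat.findGreatest P N) := Nat.findGreatest_spec v.2.2.1 ⟨v.2, hv⟩
  refine ⟨_, hk, hkC, fun z hkz hz hcond =>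
    Nat.findGreatest_is_greatest hkz hz.2.1 ⟨hz, ?_⟩⟩
  have hadj : (pGraph a b N).Adj ⟨_, hk⟩ ⟨z, hz⟩ := ⟨hk, hz, .inl ⟨hkz, hcond⟩⟩
  rw [← hkC]
  exact SimpleGraph.ConnectedComponent.sound hadj.symm.reachable

end PedigreeGraph

end Pedigree

open Pedigree

theorem bob_can_extend_component_general (a b : InfCycle) (n : ℕ)
    (C : (pGraph a b (n - 1)).ConnectedComponent) :
    ∃ (k : ℕ) (hk : k ∈ vertexSet a b (n - 1)),
      (pGraph a b (n - 1)).connectedComponentMk ⟨k, hk⟩ = C ∧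
      ∀ a' : InfCycle, (∀ j, j < n - 4 → a' j = a j) →
        ∃ b' : InfCycle, (∀ j, j < n - 4 → b' j = b j) ∧
          isVertex a' b' n n ∧ (pedigreeGraph a' b' n).Adj n k := by
  obtain ⟨k, hk, hkC, hmax⟩ := exists_greatest_mem_connectedComponent C
  obtain ⟨hk4, hkn, hkab⟩ := hk
  obtain ⟨u, hub, hua⟩ := exists_mem_nuSet_notMem hk4 hkab
  have hu : u < k := lt_of_mem_nuSet hk4 hub
  have hkuB : {k, u} ∈ cycleEdges b (n - 1) :=
    pair_mem_cycleEdges_of_forall_not_edgeCond hk4 hkn hub hua hmax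
  have hkuA : {k, u} ∉ cycleEdges a (n - 1) := fun h =>
    (mem_nuSet_or_lt_of_pair_mem_cycleEdges hk4 hkn h).elim hua (by omega)
  refine ⟨k, ⟨hk4, hkn, hkab⟩, hkC, fun a' ha' => ?_⟩
  obtain ⟨b', hb', hb'n⟩ := exists_nuSet_eq_of_mem_cycleEdges (by omega) hkuB
  have ha'k : nuSet a' k = nuSet a k := nuSet_congr fun j hj => ha' j (by omega)
  have hb'k : nuSet b' k = nuSet b k := nuSet_congr fun j hj => hb' j (by omega)
  have hnn : isVertex a' b' n n := by
    refine ⟨by omega, le_rfl, fun h => hkuA ?_⟩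
    rw [← hb'n, ← h, ← cycleEdges_congr fun j hj => ha' j (by omega)]
    exact nuSet_mem_cycleEdges (by omega)
  have hkv : isVertex a' b' n k := ⟨hk4, by omega, by rwa [ha'k, hb'k]⟩
  exact ⟨b', hb', hnn, hnn, hkv,
    .inr ⟨by omega, edgeCond_of_nuSet_eq_pair hk4 hu (ha'k ▸ hua) hb'n⟩⟩

/-- For every connected component C of `G_{n-1}^{AB}` there is a vertex
k ∈ C such that, whatever edge Alice chooses for her node n, Bob has a choice making n a
vertex of the new pedigree graph adjacent to k. -/
theorem bob_can_extend_component (a b : InfCycle) (n : ℕ) (hn : 5 ≤ n)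
    (C : (pGraph a b (n - 1)).ConnectedComponent) :
    ∃ (k : ℕ) (hk : k ∈ vertexSet a b (n - 1)),
      (pGraph a b (n - 1)).connectedComponentMk ⟨k, hk⟩ = C ∧
      ∀ a' : InfCycle, (∀ j, j < n - 4 → a' j = a j) →
        ∃ b' : InfCycle, (∀ j, j < n - 4 → b' j = b j) ∧
          isVertex a' b' n n ∧ (pedigreeGraph a' b' n).Adj n k :=
  bob_can_extend_component_general a b n C
end
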